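/- If G is a finite graph of order n and maximum degree at most 3 such that no connected component of G is isomorphic to K₄ and every triangle of G shares an edge with another triangle of G, then W^+(G) ≥ 3n/4, with equality if and only if G contains a spanning collection of n/4 pairwise vertex-disjoint copies of K₄ − e (i.e., G contains (n/4)·(K₄ − e) as a subgraph). -/

import Mathlib

open SimpleGraph

/-- A K₃-WORM coloring of `G`: every triangle receives exactly two colors. -/
def IsWormColoring {V : Type*} (G : SimpleGraph V) (c : V → ℕ) : Prop :=
  ∀ u v w : V, G.Adj u v → G.Adj u w → G.Adj v w → ({c u, c v, c w} : Finset ℕ).card = 2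

/-- The number of colors used by a coloring of a finite vertex set. -/
def colorsUsed {V : Type*} [Fintype V] (c : V → ℕ) : ℕ := (Finset.univ.image c).card

/-- The K₃-WORM feasible set of `G`: the set of `s` such that `G` has a
K₃-WORM coloring using exactly `s` colors. -/
def wormFeasible {V : Type*} [Fintype V] (G : SimpleGraph V) : Set ℕ :=
  {s | ∃ c : V → ℕ, IsWormColoring G c ∧ colorsUsed c = s}

/-- `G` is triangle-free: it has no three pairwise adjacent vertices. -/
def TriangleFree {V : Type*} (G : SimpleGraph V) : Prop :=
  ∀ u v w : V, G.Adj u v → G.Adj u w → G.Adj v w → False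

/-- The strong product `G ⊠ K₂`, on vertex set `V × Bool`:
`(u,i)` and `(v,j)` are adjacent iff (`u = v` and `i ≠ j`) or `u`,`v` are adjacent in `G`. -/
def strongProdK2 {V : Type*} (G : SimpleGraph V) : SimpleGraph (V × Bool) :=
  SimpleGraph.fromRel (fun p q => (p.1 = q.1 ∧ p.2 ≠ q.2) ∨ G.Adj p.1 q.1)

/-!
With maximum degree three and no `K₄` component, `G` contains no `K₄`, and two diamonds `K₄ − e`
sharing a vertex have the same vertex set: the closed neighbourhood of a hub of a diamond is the
whole diamond, and a shared vertex forces a shared hub. So the `k` diamonds of `G` are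
vertex-disjoint, and by the hypothesis on triangles every triangle lies in one of them.
A K₃-WORM coloring uses at most three colors on a diamond, hence at most `n - k` colors in all;
coloring all vertices differently except that the two hubs of each diamond share a color
attains `n - k`. Thus `W⁺(G) = n - k ≥ 3n/4`, with equality iff the diamonds cover all vertices.
-/

open Finset

lemma Finset.mem_pair_of_card_eq_two {α : Type*} [DecidableEq α] {x y z : α}
    (h : #({x, y, z} : Finset α) = 2) (hxy : x ≠ y) : z ∈ ({x, y} : Finset α) := by
  by_contra hz
  simp only [mem_insert, mem_singleton, not_or] at hz
  have := card_eq_three.2 ⟨x, y, z, hxy, Ne.symm hz.1, Ne.symm hz.2, rfl⟩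
  omega

lemma Finset.card_image_add_card_le_of_pairwiseDisjoint {α β : Type*} [Fintype α]
    [DecidableEq α] [DecidableEq β] (f : α → β) {𝒟 : Finset (Finset α)}
    (hdisj : (𝒟 : Set (Finset α)).PairwiseDisjoint id) (hlt : ∀ t ∈ 𝒟, #(t.image f) < #t) :
    #(univ.image f) + #𝒟 ≤ Fintype.card α := by
  set U := 𝒟.biUnion id
  have hU : #U = ∑ t ∈ 𝒟, #t := card_biUnion hdisj
  have himage : univ.image f ⊆ (univ \ U).image f ∪ 𝒟.biUnion (image f) := by
    intro y hy
    obtain ⟨x, -, rfl⟩ := mem_image.1 hy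
    by_cases hx : x ∈ U
    · obtain ⟨t, ht, hxt⟩ := mem_biUnion.1 hx
      exact mem_union_right _ (mem_biUnion.2 ⟨t, ht, mem_image_of_mem f hxt⟩)
    · exact mem_union_left _ (mem_image_of_mem f (mem_sdiff.2 ⟨mem_univ x, hx⟩))
  have hblocks : ∑ t ∈ 𝒟, #(t.image f) + #𝒟 ≤ ∑ t ∈ 𝒟, #t := by
    rw [card_eq_sum_ones, ← sum_add_distrib]
    exact sum_le_sum hlt
  calc #(univ.image f) + #𝒟 ≤ #((univ \ U).image f) + #(𝒟.biUnion (image f)) + #𝒟 := by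
        grw [card_le_card himage, card_union_le]
    _ ≤ #(univ \ U) + #U := by
        grw [card_image_le, card_biUnion_le]
        omega
    _ = Fintype.card α := by rw [card_sdiff_add_card_eq_card (subset_univ U), card_univ]

lemma Fintype.card_le_card_image_extend_add {ι α : Type*} [Fintype ι] [Fintype α]
    [DecidableEq α] (b g : ι → α) :
    Fintype.card α ≤ #(univ.image (Function.extend b g id)) + Fintype.card ι := by
  have hsub : univ \ univ.image b ⊆ univ.image (Function.extend b g id) := fun x hx => by
    have hx' : ¬∃ i, b i = x := by simpa using hx
    exact mem_image.2 ⟨x, mem_univ x, Function.extend_apply' g id x hx'⟩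
  calc Fintype.card α = #(univ \ univ.image b) + #(univ.image b) := by
        rw [card_sdiff_add_card_eq_card (subset_univ _), card_univ]
    _ ≤ #(univ.image (Function.extend b g id)) + Fintype.card ι :=
        add_le_add (card_le_card hsub) (card_image_le.trans_eq card_univ)

namespace SimpleGraph

variable {V : Type*} {G : SimpleGraph V}

lemma cliqueFree_four_of_degree_le_three [Fintype V] [DecidableRel G.Adj]
    (hdeg : ∀ v, G.degree v ≤ 3)
    (hK4 : ∀ C : G.ConnectedComponent,
      ¬ Nonempty (G.induce C.supp ≃g (⊤ : SimpleGraph (Fin 4)))) :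
    G.CliqueFree 4 := by
  classical
  intro s hs
  obtain ⟨v, hv⟩ : s.Nonempty := card_pos.1 (by rw [hs.card_eq]; norm_num)
  have hclosed : ∀ x ∈ s, ∀ y, G.Adj x y → y ∈ s := by
    intro x hx y hxy
    have hnbrs : s.erase x = G.neighborFinset x :=
      eq_of_subset_of_card_le
        (fun y hy => (mem_neighborFinset G x y).2 (hs.isClique hx (mem_of_mem_erase hy)
          (ne_of_mem_erase hy).symm))
        (by rw [card_neighborFinset_eq_degree, card_erase_of_mem hx, hs.card_eq]; exact hdeg x)
    exact mem_of_mem_erase (hnbrs ▸ (mem_neighborFinset G x y).2 hxy)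
  have hsupp : (G.connectedComponentMk v).supp = s := by
    ext y
    rw [ConnectedComponent.mem_supp_iff, ConnectedComponent.eq, reachable_comm,
      reachable_iff_reflTransGen]
    constructor
    · intro hreach
      induction hreach with
      | refl => exact hv
      | tail _ hadj ih => exact hclosed _ ih _ hadj
    · intro hy
      rcases eq_or_ne y v with rfl | hne
      · exact .refl
      · exact .single (hs.isClique hv hy hne.symm)
  refine hK4 (G.connectedComponentMk v) ⟨?_⟩
  rw [hsupp, induce_eq_top.2 hs.isClique]
  exact Iso.completeGraph (Fintype.equivFinOfCardEq (by simpa using hs.card_eq))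

/-- `a b c d` span a diamond `K₄ − e` with hubs `a`, `b` and tips `c`, `d`; the edge `cd` is
not excluded. -/
structure IsDiamond (G : SimpleGraph V) (a b c d : V) : Prop where
  adj_ab : G.Adj a b
  adj_ac : G.Adj a c
  adj_ad : G.Adj a d
  adj_bc : G.Adj b c
  adj_bd : G.Adj b d
  ne_cd : c ≠ d

lemma isDiamond_iff {a b c d : V} : G.IsDiamond a b c d ↔
    c ≠ d ∧ G.Adj a b ∧ G.Adj a c ∧ G.Adj a d ∧ G.Adj b c ∧ G.Adj b d :=
  ⟨fun h => ⟨h.ne_cd, h.adj_ab, h.adj_ac, h.adj_ad, h.adj_bc, h.adj_bd⟩,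
    fun ⟨hcd, hab, hac, had, hbc, hbd⟩ => ⟨hab, hac, had, hbc, hbd, hcd⟩⟩

namespace IsDiamond

variable {a b c d a' b' c' d' v : V}

lemma swap (h : G.IsDiamond a b c d) : G.IsDiamond b a c d :=
  ⟨h.adj_ab.symm, h.adj_bc, h.adj_bd, h.adj_ac, h.adj_ad, h.ne_cd⟩

lemma swap_tips (h : G.IsDiamond a b c d) : G.IsDiamond a b d c :=
  ⟨h.adj_ab, h.adj_ad, h.adj_ac, h.adj_bd, h.adj_bc, h.ne_cd.symm⟩

lemma adj_of_tip (h : G.IsDiamond a b c d) (hv : v = c ∨ v = d) : G.Adj a v ∧ G.Adj b v := by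
  rcases hv with rfl | rfl
  exacts [⟨h.adj_ac, h.adj_bc⟩, ⟨h.adj_ad, h.adj_bd⟩]

lemma not_adj_cd (h4 : G.CliqueFree 4) (h : G.IsDiamond a b c d) : ¬ G.Adj c d := by
  classical
  intro hcd
  refine h4 {a, b, c, d} ((is3Clique_triple_iff.2 ⟨h.adj_bc, h.adj_bd, hcd⟩).insert ?_)
  simp only [mem_insert, mem_singleton]
  rintro x (rfl | rfl | rfl)
  exacts [h.adj_ab, h.adj_ac, h.adj_ad]

variable [DecidableEq V]

lemma card_eq_four (h : G.IsDiamond a b c d) : #({a, b, c, d} : Finset V) = 4 := by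
  rw [card_insert_of_notMem (by simp [h.adj_ab.ne, h.adj_ac.ne, h.adj_ad.ne]),
    card_eq_three.2 ⟨b, c, d, h.adj_bc.ne, h.adj_bd.ne, h.ne_cd, rfl⟩]

lemma card_image_le_three {col : V → ℕ} (hcol : IsWormColoring G col)
    (h : G.IsDiamond a b c d) : #(({a, b, c, d} : Finset V).image col) ≤ 3 := by
  simp only [image_insert, image_singleton]
  by_cases hab : col a = col b
  · rw [hab, insert_idem]
    exact card_le_three
  · have hc := mem_pair_of_card_eq_two (hcol a b c h.adj_ab h.adj_ac h.adj_bc) hab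
    have hd := mem_pair_of_card_eq_two (hcol a b d h.adj_ab h.adj_ad h.adj_bd) hab
    calc #({col a, col b, col c, col d} : Finset ℕ)
        ≤ #({col a, col b} : Finset ℕ) := card_le_card (by simp [insert_subset_iff, hc, hd])
      _ ≤ 3 := card_le_two.trans (by norm_num)

lemma eq_or_eq_of_isNClique_three (h4 : G.CliqueFree 4) (h : G.IsDiamond a b c d)
    {s : Finset V} (hs : G.IsNClique 3 s) (hsub : s ⊆ {a, b, c, d}) :
    s = {a, b, c} ∨ s = {a, b, d} := by
  wlog hd : d ∉ s generalizing c d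
  · have hc : c ∉ s := fun hc => h.not_adj_cd h4 (hs.isClique hc (not_not.1 hd) h.ne_cd)
    exact (this h.swap_tips (by rwa [pair_comm]) hc).symm
  refine .inl (eq_of_subset_of_card_le (fun x hx => ?_) (hs.card_eq ▸ card_le_three))
  have := hsub hx
  simp only [mem_insert, mem_singleton] at this ⊢
  rcases this with hxa | hxb | hxc | rfl
  exacts [.inl hxa, .inr (.inl hxb), .inr (.inr hxc), absurd hx hd]

variable [Fintype V] [DecidableRel G.Adj]

lemma insert_neighborFinset_eq (hdeg : ∀ v, G.degree v ≤ 3) (h : G.IsDiamond a b c d) :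
    insert a (G.neighborFinset a) = {a, b, c, d} := by
  have hsub : ({b, c, d} : Finset V) ⊆ G.neighborFinset a := by
    simp [insert_subset_iff, h.adj_ab, h.adj_ac, h.adj_ad]
  have hcard : #(G.neighborFinset a) ≤ #({b, c, d} : Finset V) := by
    rw [card_neighborFinset_eq_degree,
      card_eq_three.2 ⟨b, c, d, h.adj_bc.ne, h.adj_bd.ne, h.ne_cd, rfl⟩]
    exact hdeg a
  rw [← eq_of_subset_of_card_le hsub hcard]

lemma eq_insert_neighborFinset (hdeg : ∀ v, G.degree v ≤ 3) (h : G.IsDiamond a b c d)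
    (hv : v = a ∨ v = b) : ({a, b, c, d} : Finset V) = insert v (G.neighborFinset v) := by
  rcases hv with rfl | rfl
  · exact (h.insert_neighborFinset_eq hdeg).symm
  · rw [h.swap.insert_neighborFinset_eq hdeg, insert_comm]

lemma vertices_eq_of_hub_of_hub (hdeg : ∀ v, G.degree v ≤ 3) (h : G.IsDiamond a b c d)
    (h' : G.IsDiamond a' b' c' d') (hv : v = a ∨ v = b) (hv' : v = a' ∨ v = b') :
    ({a, b, c, d} : Finset V) = {a', b', c', d'} :=
  (h.eq_insert_neighborFinset hdeg hv).trans (h'.eq_insert_neighborFinset hdeg hv').symm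

lemma vertices_eq_of_hub_of_tip (hdeg : ∀ v, G.degree v ≤ 3) (h4 : G.CliqueFree 4)
    (h : G.IsDiamond a b c d) (h' : G.IsDiamond a' b' c' d') (hv : v = a ∨ v = b)
    (hv' : v = c' ∨ v = d') : ({a, b, c, d} : Finset V) = {a', b', c', d'} := by
  wlog hva : v = a generalizing a b
  · rw [insert_comm]
    exact this h.swap hv.symm (hv.resolve_left hva)
  subst hva
  have hnbr : ∀ x, G.Adj v x → x = b ∨ x = c ∨ x = d := fun x hx => by
    have := h.insert_neighborFinset_eq hdeg ▸ mem_insert_of_mem ((mem_neighborFinset G v x).2 hx)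
    simpa [hx.ne'] using this
  obtain ⟨ha', hb'⟩ := h'.adj_of_tip hv'
  -- one hub of the second diamond is `b`, since its two hubs are adjacent and `c`, `d` are not
  have hb : b = a' ∨ b = b' := by
    by_contra! hne
    rcases (hnbr a' ha'.symm).resolve_left hne.1.symm with rfl | rfl <;>
      rcases (hnbr b' hb'.symm).resolve_left hne.2.symm with rfl | rfl
    · exact h'.adj_ab.ne rfl
    · exact h.not_adj_cd h4 h'.adj_ab
    · exact h.not_adj_cd h4 h'.adj_ab.symm
    · exact h'.adj_ab.ne rfl
  exact h.vertices_eq_of_hub_of_hub hdeg h' (.inr rfl) hb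

lemma vertices_eq_of_tip_of_tip (hdeg : ∀ v, G.degree v ≤ 3)
    (h : G.IsDiamond a b c d) (h' : G.IsDiamond a' b' c' d') (hv : v = c ∨ v = d)
    (hv' : v = c' ∨ v = d') : ({a, b, c, d} : Finset V) = {a', b', c', d'} := by
  by_cases ha' : a' = a ∨ a' = b
  · exact h.vertices_eq_of_hub_of_hub hdeg h' ha' (.inl rfl)
  by_cases hb' : b' = a ∨ b' = b
  · exact h.vertices_eq_of_hub_of_hub hdeg h' hb' (.inr rfl)
  -- otherwise `v` has the four distinct neighbours `a`, `b`, `a'`, `b'`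
  push Not at ha' hb'
  exfalso
  obtain ⟨hav, hbv⟩ := h.adj_of_tip hv
  obtain ⟨ha'v, hb'v⟩ := h'.adj_of_tip hv'
  have hsub : ({a, b, a', b'} : Finset V) ⊆ G.neighborFinset v := by
    simp [insert_subset_iff, hav.symm, hbv.symm, ha'v.symm, hb'v.symm]
  have hcard : #({a, b, a', b'} : Finset V) = 4 := by
    rw [card_insert_of_notMem (by simp [h.adj_ab.ne, ha'.1.symm, hb'.1.symm]),
      card_eq_three.2 ⟨b, a', b', Ne.symm ha'.2, Ne.symm hb'.2, h'.adj_ab.ne, rfl⟩]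
  have := (card_le_card hsub).trans_eq (G.card_neighborFinset_eq_degree v)
  linarith [hdeg v]

lemma vertices_eq_of_mem (hdeg : ∀ v, G.degree v ≤ 3) (h4 : G.CliqueFree 4)
    (h : G.IsDiamond a b c d) (h' : G.IsDiamond a' b' c' d')
    (hv : v ∈ ({a, b, c, d} : Finset V)) (hv' : v ∈ ({a', b', c', d'} : Finset V)) :
    ({a, b, c, d} : Finset V) = {a', b', c', d'} := by
  have hrole : ∀ {p q r s : V}, v ∈ ({p, q, r, s} : Finset V) →
      (v = p ∨ v = q) ∨ (v = r ∨ v = s) := fun hv => by simpa [or_assoc] using hv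
  rcases hrole hv with hv | hv <;> rcases hrole hv' with hv' | hv'
  · exact h.vertices_eq_of_hub_of_hub hdeg h' hv hv'
  · exact h.vertices_eq_of_hub_of_tip hdeg h4 h' hv hv'
  · exact (h'.vertices_eq_of_hub_of_tip hdeg h4 h hv' hv).symm
  · exact h.vertices_eq_of_tip_of_tip hdeg h' hv hv'

end IsDiamond

lemma exists_isDiamond_of_triangle [DecidableEq V]
    (hshare : ∀ u v w : V, G.Adj u v → G.Adj u w → G.Adj v w →
      ∃ x : V, x ≠ u ∧ x ≠ v ∧ x ≠ w ∧
        ((G.Adj u x ∧ G.Adj v x) ∨ (G.Adj u x ∧ G.Adj w x) ∨ (G.Adj v x ∧ G.Adj w x)))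
    {u v w : V} (huv : G.Adj u v) (huw : G.Adj u w) (hvw : G.Adj v w) :
    ∃ a b c d, G.IsDiamond a b c d ∧ ({u, v, w} : Finset V) ⊆ {a, b, c, d} := by
  obtain ⟨x, hxu, hxv, hxw, ⟨hux, hvx⟩ | ⟨hux, hwx⟩ | ⟨hvx, hwx⟩⟩ := hshare u v w huv huw hvw
  · exact ⟨u, v, w, x, ⟨huv, huw, hux, hvw, hvx, hxw.symm⟩, by simp [insert_subset_iff]⟩
  · exact ⟨u, w, v, x, ⟨huw, huv, hux, hvw.symm, hwx, hxv.symm⟩, by simp [insert_subset_iff]⟩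
  · exact ⟨v, w, u, x, ⟨hvw, huv.symm, hvx, huw.symm, hwx, hxu.symm⟩,
      by simp [insert_subset_iff]⟩

variable (G) in
noncomputable def diamondSets [Fintype V] [DecidableEq V] : Finset (Finset V) := by
  classical exact univ.filter fun t => ∃ a b c d, t = {a, b, c, d} ∧ G.IsDiamond a b c d

section diamondSets

variable [Fintype V] [DecidableEq V] {s t : Finset V}

lemma mem_diamondSets :
    t ∈ G.diamondSets ↔ ∃ a b c d, t = {a, b, c, d} ∧ G.IsDiamond a b c d := by
  simp [diamondSets]

lemma card_of_mem_diamondSets (ht : t ∈ G.diamondSets) : #t = 4 := by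
  obtain ⟨a, b, c, d, rfl, h⟩ := mem_diamondSets.1 ht
  exact h.card_eq_four

variable [DecidableRel G.Adj]

lemma eq_of_mem_diamondSets (hdeg : ∀ v, G.degree v ≤ 3) (h4 : G.CliqueFree 4)
    (hs : s ∈ G.diamondSets) (ht : t ∈ G.diamondSets) {v : V}
    (hvs : v ∈ s) (hvt : v ∈ t) : s = t := by
  obtain ⟨a, b, c, d, rfl, h⟩ := mem_diamondSets.1 hs
  obtain ⟨a', b', c', d', rfl, h'⟩ := mem_diamondSets.1 ht
  exact h.vertices_eq_of_mem hdeg h4 h' hvs hvt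

lemma pairwiseDisjoint_diamondSets (hdeg : ∀ v, G.degree v ≤ 3) (h4 : G.CliqueFree 4) :
    (G.diamondSets : Set (Finset V)).PairwiseDisjoint id :=
  fun _ hs _ ht hne =>
    Finset.disjoint_left.2 fun _ hvs hvt => hne (eq_of_mem_diamondSets hdeg h4 hs ht hvs hvt)

lemma card_biUnion_diamondSets (hdeg : ∀ v, G.degree v ≤ 3) (h4 : G.CliqueFree 4) :
    #(G.diamondSets.biUnion id) = 4 * #G.diamondSets := by
  rw [card_biUnion (pairwiseDisjoint_diamondSets hdeg h4),
    sum_const_nat fun t ht => (card_of_mem_diamondSets ht : #(id t) = 4), mul_comm]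

lemma four_mul_card_diamondSets_le (hdeg : ∀ v, G.degree v ≤ 3) (h4 : G.CliqueFree 4) :
    4 * #G.diamondSets ≤ Fintype.card V :=
  (card_biUnion_diamondSets hdeg h4).symm.trans_le (card_le_univ _)

lemma exists_finpartition_diamondSets_iff (hdeg : ∀ v, G.degree v ≤ 3) (h4 : G.CliqueFree 4) :
    (∃ P : Finpartition (univ : Finset V), ∀ t ∈ P.parts, t ∈ G.diamondSets) ↔
      4 * #G.diamondSets = Fintype.card V := by
  refine ⟨fun ⟨P, hP⟩ => (four_mul_card_diamondSets_le hdeg h4).antisymm ?_, fun h => ?_⟩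
  · calc Fintype.card V = ∑ t ∈ P.parts, #t := by rw [P.sum_card_parts, card_univ]
      _ = 4 * #P.parts := by
        rw [sum_const_nat fun t ht => card_of_mem_diamondSets (hP t ht), mul_comm]
      _ ≤ 4 * #G.diamondSets := Nat.mul_le_mul_left 4 (card_le_card hP)
  · have hcover : G.diamondSets.sup id = univ := by
      rw [sup_eq_biUnion]
      exact eq_univ_of_card _ ((card_biUnion_diamondSets hdeg h4).trans h)
    exact ⟨.ofErase _ (supIndep_iff_pairwiseDisjoint.2 (pairwiseDisjoint_diamondSets hdeg h4))
      hcover, fun t ht => mem_of_mem_erase ht⟩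

lemma colorsUsed_add_card_diamondSets_le (hdeg : ∀ v, G.degree v ≤ 3) (h4 : G.CliqueFree 4)
    {col : V → ℕ} (hcol : IsWormColoring G col) :
    colorsUsed col + #G.diamondSets ≤ Fintype.card V :=
  card_image_add_card_le_of_pairwiseDisjoint col (pairwiseDisjoint_diamondSets hdeg h4)
    fun t ht => by
      obtain ⟨a, b, c, d, rfl, h⟩ := mem_diamondSets.1 ht
      rw [h.card_eq_four]
      exact (h.card_image_le_three hcol).trans_lt (by norm_num)

lemma exists_merge_hubs (hdeg : ∀ v, G.degree v ≤ 3) (h4 : G.CliqueFree 4) :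
    ∃ f : V → V, (∀ t ∈ G.diamondSets, ∃ a b c d, t = {a, b, c, d} ∧ G.IsDiamond a b c d ∧
        f a = a ∧ f b = a ∧ f c = c ∧ f d = d) ∧
      Fintype.card V ≤ #(univ.image f) + #G.diamondSets := by
  choose a b c d hset hdia using fun t : G.diamondSets => mem_diamondSets.1 t.2
  have hmem : ∀ t : G.diamondSets, a t ∈ t.1 ∧ b t ∈ t.1 ∧ c t ∈ t.1 ∧ d t ∈ t.1 :=
    fun t => by simp [hset t]
  have hsame : ∀ {s t : G.diamondSets} {v : V}, v ∈ s.1 → v ∈ t.1 → s = t :=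
    fun hs ht => Subtype.ext (eq_of_mem_diamondSets hdeg h4 (Subtype.prop _) (Subtype.prop _) hs ht)
  have hb : b.Injective := fun s t hst => hsame (hmem s).2.1 (hst ▸ (hmem t).2.1)
  have hfix : ∀ (t : G.diamondSets) x, x ∈ t.1 → x ≠ b t → Function.extend b a id x = x := by
    intro t x hx hxb
    refine Function.extend_apply' a id x fun ⟨s, hs⟩ => hxb ?_
    rw [← hs, hsame (hs ▸ (hmem s).2.1 : x ∈ s.1) hx]
  refine ⟨Function.extend b a id, fun t ht => ?_, ?_⟩
  · let t' : G.diamondSets := ⟨t, ht⟩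
    exact ⟨a t', b t', c t', d t', hset t', hdia t', hfix t' _ (hmem t').1 (hdia t').adj_ab.ne,
      hb.extend_apply a id t', hfix t' _ (hmem t').2.2.1 (hdia t').adj_bc.ne',
      hfix t' _ (hmem t').2.2.2 (hdia t').adj_bd.ne'⟩
  · rw [← Fintype.card_coe G.diamondSets]
    exact Fintype.card_le_card_image_extend_add b a

lemma exists_isWormColoring_card_le (hdeg : ∀ v, G.degree v ≤ 3) (h4 : G.CliqueFree 4)
    (hshare : ∀ u v w : V, G.Adj u v → G.Adj u w → G.Adj v w →
      ∃ x : V, x ≠ u ∧ x ≠ v ∧ x ≠ w ∧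
        ((G.Adj u x ∧ G.Adj v x) ∨ (G.Adj u x ∧ G.Adj w x) ∨ (G.Adj v x ∧ G.Adj w x))) :
    ∃ col : V → ℕ, IsWormColoring G col ∧
      Fintype.card V ≤ colorsUsed col + #G.diamondSets := by
  obtain ⟨f, hf, hcard⟩ := exists_merge_hubs hdeg h4
  let ν : V → ℕ := fun v => Fintype.equivFin V v
  have hν : ν.Injective := Fin.val_injective.comp (Fintype.equivFin V).injective
  refine ⟨ν ∘ f, fun u v w huv huw hvw => ?_, ?_⟩
  · obtain ⟨a₀, b₀, c₀, d₀, h₀, hsub⟩ := exists_isDiamond_of_triangle hshare huv huw hvw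
    obtain ⟨a, b, c, d, hset, h, hfa, hfb, hfc, hfd⟩ :=
      hf _ (mem_diamondSets.2 ⟨a₀, b₀, c₀, d₀, rfl, h₀⟩)
    have himage : ({(ν ∘ f) u, (ν ∘ f) v, (ν ∘ f) w} : Finset ℕ) =
        ({u, v, w} : Finset V).image (ν ∘ f) := by simp [image_insert]
    rw [himage]
    rcases h.eq_or_eq_of_isNClique_three h4 (is3Clique_triple_iff.2 ⟨huv, huw, hvw⟩)
      (hset ▸ hsub) with htri | htri <;>
      simp only [htri, image_insert, image_singleton, Function.comp_apply, hfa, hfb, hfc, hfd,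
        insert_idem]
    exacts [card_pair (hν.ne h.adj_ac.ne), card_pair (hν.ne h.adj_ad.ne)]
  · rwa [colorsUsed, ← image_image, card_image_of_injective _ hν]

end diamondSets

end SimpleGraph

/-- If `G` has order `n`, maximum degree at most 3, no connected component isomorphic
to `K₄`, and every triangle of `G` shares an edge with another triangle, then
`W⁺(G) ≥ 3n/4`, with equality if and only if `G` contains a spanning collection of
`n/4` pairwise vertex-disjoint copies of `K₄ − e`
(i.e. `G` contains `(n/4)·(K₄ − e)` as a subgraph). -/
theorem wormUpper_ge_three_quarters {V : Type*} [Fintype V] [DecidableEq V]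
    (G : SimpleGraph V) [DecidableRel G.Adj] (hdeg : ∀ v : V, G.degree v ≤ 3)
    (hK4 : ∀ C : G.ConnectedComponent,
      ¬ Nonempty (G.induce C.supp ≃g (⊤ : SimpleGraph (Fin 4))))
    (hshare : ∀ u v w : V, G.Adj u v → G.Adj u w → G.Adj v w →
      ∃ x : V, x ≠ u ∧ x ≠ v ∧ x ≠ w ∧
        ((G.Adj u x ∧ G.Adj v x) ∨ (G.Adj u x ∧ G.Adj w x) ∨ (G.Adj v x ∧ G.Adj w x))) :
    ∀ w : ℕ, IsGreatest (wormFeasible G) w →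
      3 * Fintype.card V ≤ 4 * w ∧
      (3 * Fintype.card V = 4 * w ↔
        ∃ P : Finpartition (Finset.univ : Finset V),
          ∀ t ∈ P.parts, ∃ a b c d : V, t = {a, b, c, d} ∧ c ≠ d ∧
            G.Adj a b ∧ G.Adj a c ∧ G.Adj a d ∧ G.Adj b c ∧ G.Adj b d) := by
  rintro w ⟨⟨col, hcol, rfl⟩, hmax⟩
  have h4 := cliqueFree_four_of_degree_le_three hdeg hK4
  obtain ⟨col', hcol', hcard⟩ := exists_isWormColoring_card_le hdeg h4 hshare
  have hle : colorsUsed col' ≤ colorsUsed col := hmax ⟨col', hcol', rfl⟩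
  have hupper := colorsUsed_add_card_diamondSets_le hdeg h4 hcol
  have hk := four_mul_card_diamondSets_le hdeg h4
  have hpart := exists_finpartition_diamondSets_iff hdeg h4
  simp only [mem_diamondSets, isDiamond_iff] at hpart
  rw [hpart]
  omega
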